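/- Let n ≥ 2 and let f : ℝⁿ → ℝⁿ be an L-bilipschitz homeomorphism (|x−y|/L ≤ |f(x)−f(y)| ≤ L|x−y| for all x,y ∈ ℝⁿ) which maps a domain D ⊊ ℝⁿ onto a domain D′ ⊊ ℝⁿ. Then for all x₁, x₂ ∈ D: (1/L³) c_D(x₁,x₂) ≤ c_{D′}(f(x₁), f(x₂)) ≤ L³ c_D(x₁,x₂). -/
import Mathlib

open Metric Set

abbrev E (n : ℕ) := EuclideanSpace ℝ (Fin n)

noncomputable def cassinian {n : ℕ} (D : Set (E n)) (x y : E n) : ℝ :=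
  ⨆ p ∈ frontier D, dist x y / (dist x p * dist p y)

lemma cassinian_nonneg {n : ℕ} (D : Set (E n)) (x y : E n) : 0 ≤ cassinian D x y :=
  Real.iSup_nonneg fun p => Real.iSup_nonneg fun _ =>
    div_nonneg dist_nonneg (mul_nonneg dist_nonneg dist_nonneg)

lemma cassinian_le {n : ℕ} {D : Set (E n)} {x y : E n} {M : ℝ} (hM : 0 ≤ M)
    (h : ∀ p ∈ frontier D, dist x y / (dist x p * dist p y) ≤ M) :
    cassinian D x y ≤ M :=
  Real.iSup_le (fun p => Real.iSup_le (fun hp => h p hp) hM) hM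

lemma le_cassinian {n : ℕ} {D : Set (E n)} (hD : IsOpen D) {x y p : E n}
    (hx : x ∈ D) (hy : y ∈ D) (hp : p ∈ frontier D) :
    dist x y / (dist x p * dist p y) ≤ cassinian D x y := by
  have hFc : IsClosed (frontier D) := isClosed_frontier
  have hFne : (frontier D).Nonempty := ⟨p, hp⟩
  have hxF : x ∉ frontier D := fun h => (hD.frontier_eq ▸ h).2 hx
  have hyF : y ∉ frontier D := fun h => (hD.frontier_eq ▸ h).2 hy
  have hdx : 0 < infDist x (frontier D) := (hFc.notMem_iff_infDist_pos hFne).1 hxF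
  have hdy : 0 < infDist y (frontier D) := (hFc.notMem_iff_infDist_pos hFne).1 hyF
  set M : ℝ := dist x y / (infDist x (frontier D) * infDist y (frontier D)) with hMdef
  have hM : 0 ≤ M := div_nonneg dist_nonneg (mul_nonneg hdx.le hdy.le)
  have hbdd : BddAbove (Set.range fun q => ⨆ _ : q ∈ frontier D,
      dist x y / (dist x q * dist q y)) := by
    refine ⟨M, ?_⟩
    rintro _ ⟨q, rfl⟩
    refine Real.iSup_le (fun hq => ?_) hM
    have h1 : infDist x (frontier D) ≤ dist x q := infDist_le_dist_of_mem hq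
    have h2 : infDist y (frontier D) ≤ dist q y := by
      rw [dist_comm]; exact infDist_le_dist_of_mem hq
    rw [hMdef]
    gcongr
  exact le_ciSup_of_le hbdd p (ciSup_pos (f := fun _ : p ∈ frontier D => dist x y / (dist x p * dist p y)) hp).ge

lemma key {n : ℕ} {D D' : Set (E n)} (hD : IsOpen D)
    {L : ℝ} (hL : 0 < L) {f : E n → E n}
    (hlip : ∀ x y : E n, dist x y / L ≤ dist (f x) (f y) ∧ dist (f x) (f y) ≤ L * dist x y)
    (hfront : f '' frontier D = frontier D')
    {x₁ x₂ : E n} (hx₁ : x₁ ∈ D) (hx₂ : x₂ ∈ D) :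
    cassinian D' (f x₁) (f x₂) ≤ L ^ 3 * cassinian D x₁ x₂ := by
  have hL3 : (0:ℝ) < L ^ 3 := by positivity
  refine cassinian_le (mul_nonneg hL3.le (cassinian_nonneg D x₁ x₂)) ?_
  intro p' hp'
  rw [← hfront] at hp'
  obtain ⟨p, hp, rfl⟩ := hp'
  have hpD : p ∉ D := fun h => (hD.frontier_eq ▸ hp).2 h
  have hd1 : 0 < dist x₁ p := dist_pos.2 (by rintro rfl; exact hpD hx₁)
  have hd2 : 0 < dist p x₂ := dist_pos.2 (by rintro rfl; exact hpD hx₂)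
  have ha : dist (f x₁) (f x₂) ≤ L * dist x₁ x₂ := (hlip x₁ x₂).2
  have hb : dist x₁ p / L ≤ dist (f x₁) (f p) := (hlip x₁ p).1
  have hc : dist p x₂ / L ≤ dist (f p) (f x₂) := (hlip p x₂).1
  calc dist (f x₁) (f x₂) / (dist (f x₁) (f p) * dist (f p) (f x₂))
      ≤ (L * dist x₁ x₂) / ((dist x₁ p / L) * (dist p x₂ / L)) := by
        gcongr <;> positivity
    _ = L ^ 3 * (dist x₁ x₂ / (dist x₁ p * dist p x₂)) := by
        field_simp
    _ ≤ L ^ 3 * cassinian D x₁ x₂ := by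
        gcongr
        exact le_cassinian hD hx₁ hx₂ hp

/-- **Bi-Lipschitz distortion of the Cassinian metric.**
If `f : ℝⁿ → ℝⁿ` is an `L`-bilipschitz homeomorphism mapping a domain `D ⊊ ℝⁿ`
onto a domain `D' ⊊ ℝⁿ`, then for all `x₁, x₂ ∈ D`:
`(1/L³) c_D(x₁,x₂) ≤ c_{D'}(f x₁, f x₂) ≤ L³ c_D(x₁,x₂)`. -/
theorem cassinian_bilipschitz (n : ℕ) (hn : 2 ≤ n)
    (D D' : Set (E n))
    (hD : IsOpen D) (hDconn : IsConnected D) (hDproper : D ≠ univ)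
    (hD' : IsOpen D') (hD'conn : IsConnected D') (hD'proper : D' ≠ univ)
    (L : ℝ) (hL : 0 < L)
    (f : E n → E n) (hbij : Function.Bijective f)
    (hlip : ∀ x y : E n, dist x y / L ≤ dist (f x) (f y) ∧ dist (f x) (f y) ≤ L * dist x y)
    (him : f '' D = D')
    (x₁ x₂ : E n) (hx₁ : x₁ ∈ D) (hx₂ : x₂ ∈ D) :
    (1 / L ^ 3) * cassinian D x₁ x₂ ≤ cassinian D' (f x₁) (f x₂) ∧
      cassinian D' (f x₁) (f x₂) ≤ L ^ 3 * cassinian D x₁ x₂ := by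
  have hL3 : (0:ℝ) < L ^ 3 := by positivity
  set e := Equiv.ofBijective f hbij with he
  set g : E n → E n := ⇑e.symm with hgdef
  have hfg : ∀ a, f (g a) = a := fun a => e.apply_symm_apply a
  have hgf : ∀ a, g (f a) = a := fun a => e.symm_apply_apply a
  have hglip : ∀ x y : E n, dist x y / L ≤ dist (g x) (g y) ∧ dist (g x) (g y) ≤ L * dist x y := by
    intro x y
    have h1 := (hlip (g x) (g y)).1
    have h2 := (hlip (g x) (g y)).2
    rw [hfg, hfg] at h1 h2
    rw [div_le_iff₀ hL] at h1
    constructor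
    · rw [div_le_iff₀ hL]
      nlinarith [dist_nonneg (x := g x) (y := g y)]
    · linarith
  have hLipf : LipschitzWith ⟨L, hL.le⟩ f :=
    LipschitzWith.of_dist_le_mul fun x y => (hlip x y).2
  have hLipg : LipschitzWith ⟨L, hL.le⟩ g :=
    LipschitzWith.of_dist_le_mul fun x y => (hglip x y).2
  let h : E n ≃ₜ E n :=
    { toEquiv := e
      continuous_toFun := hLipf.continuous
      continuous_invFun := hLipg.continuous }
  have hcoe : ⇑h = f := rfl
  have hcoe' : ⇑h.symm = g := rfl
  have hfront : f '' frontier D = frontier D' := by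
    have := h.image_frontier D
    rwa [hcoe, him] at this
  have hgD' : g '' D' = D := by
    rw [← him, Set.image_image]
    simp [hgf]
  have hfront' : g '' frontier D' = frontier D := by
    have := h.symm.image_frontier D'
    rwa [hcoe', hgD'] at this
  have hfx₁ : f x₁ ∈ D' := him ▸ Set.mem_image_of_mem f hx₁
  have hfx₂ : f x₂ ∈ D' := him ▸ Set.mem_image_of_mem f hx₂
  constructor
  · rw [one_div, inv_mul_le_iff₀ hL3]
    have := key hD' hL hglip hfront' hfx₁ hfx₂
    rwa [hgf, hgf] at this
  · exact key hD hL hlip hfront hx₁ hx₂
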